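/- Let Γ ⊆ Pⁿ be a finite set of d points in linearly general position and let ℓ be an integer with ℓ ≥ ⌈d/n⌉ (equivalently d ≤ ℓn). Then Φ(Γ)_ℓ generates I(Γ)_ℓ as a k-vector space. -/

import Mathlib

open MvPolynomial

noncomputable section

/-- A set `Γ` in projective `n`-space over `k` is in linearly general position if any
`n+1` or fewer of its points have linearly independent representative vectors. -/
def LinGenPos (k : Type*) [Field k] (n : ℕ)
    (Γ : Set (Projectivization k (Fin (n + 1) → k))) : Prop :=
  ∀ s : Finset (Projectivization k (Fin (n + 1) → k)), ↑s ⊆ Γ → s.card ≤ n + 1 →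
    LinearIndependent k
      (fun p : s => Projectivization.rep (p : Projectivization k (Fin (n + 1) → k)))

/-- The subspace of polynomials vanishing at (fixed representatives of) all points of `Γ`. -/
def evalVanishing (k : Type*) [Field k] (n : ℕ)
    (Γ : Set (Projectivization k (Fin (n + 1) → k))) :
    Submodule k (MvPolynomial (Fin (n + 1)) k) where
  carrier := {F | ∀ P ∈ Γ, eval (Projectivization.rep P) F = 0}
  add_mem' := fun ha hb P hP => by simp [ha P hP, hb P hP]
  zero_mem' := fun P hP => by simp
  smul_mem' := fun c F hF P hP => by simp [smul_eval, hF P hP]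

/-- `I(Γ)_ℓ` : degree-`ℓ` homogeneous polynomials vanishing on `Γ`, as a `k`-subspace. -/
def gradedVanishing (k : Type*) [Field k] (n : ℕ)
    (Γ : Set (Projectivization k (Fin (n + 1) → k))) (ℓ : ℕ) :
    Submodule k (MvPolynomial (Fin (n + 1)) k) :=
  homogeneousSubmodule (Fin (n + 1)) k ℓ ⊓ evalVanishing k n Γ

/-- `I(Γ)` : the (homogeneous) vanishing ideal of `Γ`, i.e. polynomials vanishing
at every vector of every line belonging to `Γ`. -/
def vanishingIdeal (k : Type*) [Field k] (n : ℕ)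
    (Γ : Set (Projectivization k (Fin (n + 1) → k))) :
    Ideal (MvPolynomial (Fin (n + 1)) k) where
  carrier := {F | ∀ P ∈ Γ, ∀ c : k, eval (c • Projectivization.rep P) F = 0}
  add_mem' := fun ha hb P hP c => by simp [ha P hP c, hb P hP c]
  zero_mem' := fun P hP c => by simp
  smul_mem' := fun a F hF P hP c => by simp [smul_eq_mul, hF P hP c]

/-- `Φ(Γ)_ℓ` : completely decomposable degree-`ℓ` elements of `I(Γ)`. -/
def Phi (k : Type*) [Field k] (n : ℕ)
    (Γ : Set (Projectivization k (Fin (n + 1) → k))) (ℓ : ℕ) :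
    Set (MvPolynomial (Fin (n + 1)) k) :=
  {F | F ∈ gradedVanishing k n Γ ℓ ∧
    ∃ h : Fin ℓ → MvPolynomial (Fin (n + 1)) k,
      (∀ i, h i ≠ 0 ∧ (h i).IsHomogeneous 1) ∧ F = ∏ i, h i}

/-- `S₁Φ(Γ)_m` : products of a nonzero linear form with an element of `Φ(Γ)_m`. -/
def S1Phi (k : Type*) [Field k] (n : ℕ)
    (Γ : Set (Projectivization k (Fin (n + 1) → k))) (m : ℕ) :
    Set (MvPolynomial (Fin (n + 1)) k) :=
  {G | ∃ h F, h ≠ 0 ∧ MvPolynomial.IsHomogeneous h 1 ∧ F ∈ Phi k n Γ m ∧ G = h * F}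

/-- `λ_Γ(G)` : the number of points of `Γ` at which `G` vanishes. -/
def lambdaGamma (k : Type*) [Field k] (n : ℕ)
    (Γ : Set (Projectivization k (Fin (n + 1) → k)))
    (G : MvPolynomial (Fin (n + 1)) k) : ℕ :=
  Set.ncard {P ∈ Γ | eval (Projectivization.rep P) G = 0}

/-!
Induction on `#Γ`, removing one point `p`; write `V` for the span of `Φ(Γ)_ℓ` and
`Γ' = Γ \ {p}`. By induction `I(Γ')_ℓ` is spanned by `Φ(Γ')_ℓ`, and `I(Γ)_ℓ` is the part of it
vanishing at `p`. So it suffices that every `G ∈ Φ(Γ')_ℓ` is congruent modulo `V` to `G(p) • H`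
for a single `H`.

Two products of linear forms that differ in one factor, agree at `p` and vanish on `Γ'` differ by
an element of `Φ(Γ)_ℓ`. A nonzero linear form vanishes at no more than `n` points of `Γ`, so the
factors of `G` distribute the `#Γ' < ℓ n` points of `Γ'` among `ℓ` boxes of capacity `n`.
Replacing the factors one by one by linear forms through the boxes, normalised at `p`, turns `G`
into `G(p)` times a product `H_g` depending only on the distribution `g`. Finally, moving a single
point between boxes changes `H_g` by an element of `V`, and since some box always has room such
moves connect any two distributions.
-/

open Finset

section LinearForms

variable {σ k : Type*} [Fintype σ] [Field k]

theorem MvPolynomial.IsHomogeneous.exists_linearMap_eval_eq {h : MvPolynomial σ k}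
    (hh : h.IsHomogeneous 1) : ∃ φ : (σ → k) →ₗ[k] k, ∀ v, eval v h = φ v := by
  have hspan : h ∈ Submodule.span k (Set.range (X : σ → MvPolynomial σ k)) := by
    rw [← homogeneousSubmodule_one_eq_span_X]
    exact hh
  obtain ⟨c, rfl⟩ := (Submodule.mem_span_range_iff_exists_fun k).mp hspan
  exact ⟨∑ i, c i • LinearMap.proj i, fun v => by simp [smul_eval]⟩

theorem LinearMap.exists_isHomogeneous_one_eval_eq (φ : (σ → k) →ₗ[k] k) :
    ∃ h : MvPolynomial σ k, h.IsHomogeneous 1 ∧ ∀ v, eval v h = φ v := by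
  classical
  refine ⟨∑ i, C (φ (Pi.single i 1)) * X i,
    IsHomogeneous.sum _ _ _ fun i _ => isHomogeneous_C_mul_X _ i, fun v => ?_⟩
  simp only [eval_sum, eval_mul, eval_C, eval_X]
  conv_rhs => rw [← univ_sum_single v, map_sum]
  refine sum_congr rfl fun i _ => ?_
  rw [mul_comm, ← smul_eq_mul, ← map_smul, ← Pi.single_smul, smul_eq_mul, mul_one]

end LinearForms

section GeneralPosition

variable {k : Type*} [Field k] {n : ℕ}

def IsSeparatingForm (p : Projectivization k (Fin (n + 1) → k))
    (A : Finset (Projectivization k (Fin (n + 1) → k))) (l : MvPolynomial (Fin (n + 1)) k) :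
    Prop :=
  l.IsHomogeneous 1 ∧ eval p.rep l = 1 ∧ ∀ q ∈ A, eval q.rep l = 0

theorem IsSeparatingForm.ne_zero {p : Projectivization k (Fin (n + 1) → k)}
    {A : Finset (Projectivization k (Fin (n + 1) → k))} {l : MvPolynomial (Fin (n + 1)) k}
    (hl : IsSeparatingForm p A l) : l ≠ 0 := by
  rintro rfl
  simpa using hl.2.1

variable {Γ : Set (Projectivization k (Fin (n + 1) → k))}

theorem LinGenPos.mono {Γ' : Set (Projectivization k (Fin (n + 1) → k))}
    (hlgp : LinGenPos k n Γ) (h : Γ' ⊆ Γ) : LinGenPos k n Γ' :=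
  fun s hs hcard => hlgp s (hs.trans h) hcard

theorem LinGenPos.card_le_of_eval_eq_zero (hlgp : LinGenPos k n Γ)
    {h : MvPolynomial (Fin (n + 1)) k} (h0 : h ≠ 0) (hh : h.IsHomogeneous 1)
    {A : Finset (Projectivization k (Fin (n + 1) → k))} (hA : ↑A ⊆ Γ)
    (hvan : ∀ q ∈ A, eval q.rep h = 0) : #A ≤ n := by
  by_contra! hlt
  obtain ⟨B, hBA, hB⟩ := exists_subset_card_eq (show n + 1 ≤ #A by omega)
  obtain ⟨φ, hφ⟩ := hh.exists_linearMap_eval_eq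
  have hspan := (hlgp B ((coe_subset.mpr hBA).trans hA) hB.le).span_eq_top_of_card_eq_finrank'
    (by simp [hB])
  have hφ0 : φ = 0 := LinearMap.ext_on_range hspan fun q => by
    simp [← hφ, hvan q (hBA q.2)]
  exact h0 (hh.eq_zero_of_forall_eval_eq_zero_of_le_card (fun v => by simp [hφ, hφ0])
    (Cardinal.one_le_iff_ne_zero.mpr (Cardinal.mk_ne_zero k)))

theorem LinGenPos.exists_isSeparatingForm (hlgp : LinGenPos k n Γ)
    {A : Finset (Projectivization k (Fin (n + 1) → k))} (hA : ↑A ⊆ Γ) (hcard : #A ≤ n)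
    {p : Projectivization k (Fin (n + 1) → k)} (hp : p ∈ Γ) (hpA : p ∉ A) :
    ∃ l, IsSeparatingForm p A l := by
  classical
  have hind : LinearIndepOn k Projectivization.rep (insert p (A : Set _)) := by
    rw [← coe_insert]
    exact hlgp (insert p A) (by simpa [Set.insert_subset_iff] using ⟨hp, hA⟩)
      ((card_insert_le p A).trans (by omega))
  obtain ⟨φ, hφp, hφA⟩ :=
    Submodule.exists_le_ker_of_notMem ((linearIndepOn_insert (by simpa using hpA)).mp hind).2
  obtain ⟨l, hl, hlφ⟩ := ((φ p.rep)⁻¹ • φ).exists_isHomogeneous_one_eval_eq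
  refine ⟨l, hl, by simp [hlφ, hφp], fun q hq => ?_⟩
  simp [hlφ, LinearMap.mem_ker.mp (hφA (Submodule.subset_span ⟨q, hq, rfl⟩))]

end GeneralPosition

section DecomposableForms

variable {k : Type*} [Field k] {n ℓ : ℕ} {Γ : Set (Projectivization k (Fin (n + 1) → k))}

theorem span_Phi_le_gradedVanishing : Submodule.span k (Phi k n Γ ℓ) ≤ gradedVanishing k n Γ ℓ :=
  Submodule.span_le.mpr fun _ hF => hF.1

theorem gradedVanishing_anti {Γ' : Set (Projectivization k (Fin (n + 1) → k))} (h : Γ' ⊆ Γ) :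
    gradedVanishing k n Γ ℓ ≤ gradedVanishing k n Γ' ℓ :=
  fun _ hF => ⟨hF.1, fun q hq => hF.2 q (h hq)⟩

theorem prod_mem_Phi (u : Fin ℓ → MvPolynomial (Fin (n + 1)) k)
    (hu : ∀ i, u i ≠ 0 ∧ (u i).IsHomogeneous 1) (hvan : ∀ q ∈ Γ, eval q.rep (∏ i, u i) = 0) :
    ∏ i, u i ∈ Phi k n Γ ℓ := by
  refine ⟨⟨?_, hvan⟩, u, hu, rfl⟩
  simpa using IsHomogeneous.prod univ u (fun _ => 1) fun i _ => (hu i).2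

variable {p : Projectivization k (Fin (n + 1) → k)}

theorem mkQ_prod_update_eq (u : Fin ℓ → MvPolynomial (Fin (n + 1)) k) (j : Fin ℓ)
    {w : MvPolynomial (Fin (n + 1)) k} (hu : ∀ i, u i ≠ 0 ∧ (u i).IsHomogeneous 1)
    (hw : w.IsHomogeneous 1) (hu_van : ∀ q ∈ Γ, eval q.rep (∏ i, u i) = 0)
    (hw_van : ∀ q ∈ Γ, eval q.rep (∏ i, Function.update u j w i) = 0)
    (hwp : eval p.rep w = eval p.rep (u j)) :
    (Submodule.span k (Phi k n (insert p Γ) ℓ)).mkQ (∏ i, Function.update u j w i) =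
      (Submodule.span k (Phi k n (insert p Γ) ℓ)).mkQ (∏ i, u i) := by
  classical
  rcases eq_or_ne w (u j) with rfl | hne
  · rw [Function.update_eq_self]
  have hdiff : ∏ i, Function.update u j w i - ∏ i, u i =
      ∏ i, Function.update u j (w - u j) i := by
    simp only [prod_update_of_mem (mem_univ j), ← mul_prod_erase univ u (mem_univ j),
      sdiff_singleton_eq_erase, sub_mul]
  rw [Submodule.mkQ_apply, Submodule.mkQ_apply, Submodule.Quotient.eq, hdiff]
  refine Submodule.subset_span (prod_mem_Phi _ (fun i => ?_) fun q hq => ?_)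
  · rcases eq_or_ne i j with rfl | hij
    · simpa using ⟨sub_ne_zero.mpr hne, hw.sub (hu i).2⟩
    · simpa [hij] using hu i
  · rcases hq with rfl | hq
    · simp [prod_update_of_mem (mem_univ j), hwp]
    · rw [← hdiff, map_sub, hw_van q hq, hu_van q hq, sub_self]

theorem mkQ_prod_eq_of_exists_common_zero (u v : Fin ℓ → MvPolynomial (Fin (n + 1)) k)
    (hu : ∀ i, u i ≠ 0 ∧ (u i).IsHomogeneous 1) (hv : ∀ i, v i ≠ 0 ∧ (v i).IsHomogeneous 1)
    (hp : ∀ i, eval p.rep (u i) = eval p.rep (v i))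
    (hzero : ∀ q ∈ Γ, ∃ i, eval q.rep (u i) = 0 ∧ eval q.rep (v i) = 0) :
    (Submodule.span k (Phi k n (insert p Γ) ℓ)).mkQ (∏ i, u i) =
      (Submodule.span k (Phi k n (insert p Γ) ℓ)).mkQ (∏ i, v i) := by
  classical
  have hvan (T : Finset (Fin ℓ)) : ∀ q ∈ Γ, eval q.rep (∏ i, T.piecewise v u i) = 0 := by
    intro q hq
    obtain ⟨i, hui, hvi⟩ := hzero q hq
    rw [eval_prod]
    exact prod_eq_zero (mem_univ i) (by by_cases hi : i ∈ T <;> simp [hi, hui, hvi])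
  have hswap (T : Finset (Fin ℓ)) :
      (Submodule.span k (Phi k n (insert p Γ) ℓ)).mkQ (∏ i, T.piecewise v u i) =
        (Submodule.span k (Phi k n (insert p Γ) ℓ)).mkQ (∏ i, u i) := by
    induction T using Finset.induction_on with
    | empty => simp
    | insert j T hj ih =>
      rw [piecewise_insert, mkQ_prod_update_eq _ _ (fun i => ?_) (hv j).2 (hvan T), ih]
      · simpa [← piecewise_insert] using hvan (insert j T)
      · simp [hj, hp j]
      · by_cases hi : i ∈ T <;> simp [hi, hu i, hv i]
  simpa using (hswap univ).symm

end DecomposableForms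

section Balanced

variable {α : Type*} {ℓ n : ℕ} {S : Finset α}

def IsBalanced (S : Finset α) (n : ℕ) (g : α → Fin ℓ) : Prop :=
  ∀ i, #{x ∈ S | g x = i} ≤ n

theorem exists_card_fiber_lt (hS : #S < ℓ * n) (g : α → Fin ℓ) :
    ∃ b, #{x ∈ S | g x = b} < n := by
  by_contra! h
  have hsum := card_eq_sum_card_fiberwise (s := S) (t := univ) fun x _ => mem_univ (g x)
  have : ℓ * n ≤ #S := by simpa [hsum] using sum_le_sum fun i (_ : i ∈ univ) => h i
  omega

theorem IsBalanced.update_insert [DecidableEq α] {g : α → Fin ℓ} (hg : IsBalanced S n g)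
    {b : Fin ℓ} (hb : #{y ∈ S | g y = b} < n) (x : α) :
    IsBalanced (insert x S) n (Function.update g x b) := by
  intro i
  rcases eq_or_ne b i with rfl | hbi
  · calc #{y ∈ insert x S | Function.update g x b y = b}
        ≤ #(insert x {y ∈ S | g y = b}) :=
          card_le_card fun y => by by_cases hy : y = x <;> simp_all [Function.update_apply]
      _ ≤ #{y ∈ S | g y = b} + 1 := card_insert_le _ _
      _ ≤ n := hb
  · calc #{y ∈ insert x S | Function.update g x b y = i} ≤ #{y ∈ S | g y = i} :=
          card_le_card fun y => by by_cases hy : y = x <;> simp_all [Function.update_apply]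
      _ ≤ n := hg i

theorem exists_isBalanced (hS : #S < ℓ * n) : ∃ g : α → Fin ℓ, IsBalanced S n g := by
  classical
  induction S using Finset.induction_on with
  | empty => exact ⟨fun _ => ⟨0, Nat.pos_of_mul_pos_right hS⟩, fun i => by simp⟩
  | insert x S _ ih =>
    have hS' : #S < ℓ * n := (card_le_card (subset_insert x S)).trans_lt hS
    obtain ⟨g, hg⟩ := ih hS'
    obtain ⟨b, hb⟩ := exists_card_fiber_lt hS' g
    exact ⟨_, hg.update_insert hb x⟩

theorem IsBalanced.exists_update_card_fiber_lt [DecidableEq α] (hS : #S < ℓ * n)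
    {g₁ g₂ : α → Fin ℓ} (h₁ : IsBalanced S n g₁) (h₂ : IsBalanced S n g₂) {x : α} (hxS : x ∈ S)
    (hx : g₁ x ≠ g₂ x) (hfull : n ≤ #{y ∈ S | g₁ y = g₂ x}) :
    ∃ y ∈ S, ∃ b, IsBalanced S n (Function.update g₁ y b) ∧
      #{z ∈ S | Function.update g₁ y b z = g₂ x} < n ∧ g₁ y ≠ g₂ y := by
  have hcard : #{y ∈ S | g₁ y = g₂ x} = n := (h₁ _).antisymm hfull
  obtain ⟨y, hyS, hy, hy₂⟩ : ∃ y ∈ S, g₁ y = g₂ x ∧ g₂ y ≠ g₂ x := by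
    by_contra! h
    have hsub : insert x {y ∈ S | g₁ y = g₂ x} ⊆ {y ∈ S | g₂ y = g₂ x} := by
      intro z hz
      rcases mem_insert.mp hz with rfl | hz
      · simpa using hxS
      · simp only [mem_filter] at hz ⊢
        exact ⟨hz.1, h z hz.1 hz.2⟩
    have := (card_le_card hsub).trans (h₂ _)
    rw [card_insert_of_notMem (by simp [hx]), hcard] at this
    omega
  obtain ⟨b, hb⟩ := exists_card_fiber_lt hS g₁
  refine ⟨y, hyS, b, by simpa [insert_eq_of_mem hyS] using h₁.update_insert hb y, ?_,
    fun h => hy₂ (h.symm.trans hy)⟩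
  have hb_ne : b ≠ g₂ x := by rintro rfl; omega
  calc #{z ∈ S | Function.update g₁ y b z = g₂ x} ≤ #({z ∈ S | g₁ z = g₂ x}.erase y) :=
        card_le_card fun z => by
          by_cases hz : z = y <;> simp_all [Function.update_apply]
    _ < n := by
      rw [card_erase_of_mem (by simp [hyS, hy]), hcard]
      omega

/- Induction on the number of points where `g₁` and `g₂` differ: a point `x` with
`g₁ x ≠ g₂ x` is moved to the box `g₂ x`, after a point of that box misplaced by `g₁` has been
moved out of it if the box is full. -/
theorem IsBalanced.apply_eq_of_forall_update [DecidableEq α] {β : Type*} (hS : #S < ℓ * n)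
    {f : (α → Fin ℓ) → β} (hf_congr : ∀ g g', Set.EqOn g g' S → f g = f g')
    (hf_update : ∀ g x b, x ∈ S → IsBalanced S n g → IsBalanced S n (Function.update g x b) →
      f (Function.update g x b) = f g)
    {g₁ g₂ : α → Fin ℓ} (h₁ : IsBalanced S n g₁) (h₂ : IsBalanced S n g₂) : f g₁ = f g₂ := by
  induction hm : #{x ∈ S | g₁ x ≠ g₂ x} using Nat.strong_induction_on generalizing g₁ with
  | _ m ih =>
  obtain hD | ⟨x, hx⟩ := Finset.eq_empty_or_nonempty {x ∈ S | g₁ x ≠ g₂ x}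
  · exact hf_congr _ _ fun y hy => by simpa [hy] using filter_eq_empty_iff.mp hD hy
  obtain ⟨hxS, hx⟩ := mem_filter.mp hx
  obtain ⟨g, hfg, hg, hroom, hD⟩ : ∃ g, f g = f g₁ ∧ IsBalanced S n g ∧
      #{y ∈ S | g y = g₂ x} < n ∧ ∀ y ∈ S, g y ≠ g₂ y → g₁ y ≠ g₂ y := by
    by_cases hroom : #{y ∈ S | g₁ y = g₂ x} < n
    · exact ⟨g₁, rfl, h₁, hroom, fun _ _ => id⟩
    obtain ⟨y, hyS, b, hb, hyroom, hy⟩ :=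
      h₁.exists_update_card_fiber_lt hS h₂ hxS hx (not_lt.mp hroom)
    refine ⟨_, hf_update g₁ y b hyS h₁ hb, hb, hyroom, fun z _ => ?_⟩
    rcases eq_or_ne z y with rfl | hzy
    · exact fun _ => hy
    · simp [Function.update_of_ne hzy]
  have hg' : IsBalanced S n (Function.update g x (g₂ x)) := by
    simpa [insert_eq_of_mem hxS] using hg.update_insert hroom x
  have hlt : #{y ∈ S | Function.update g x (g₂ x) y ≠ g₂ y} < m := by
    refine hm ▸ (card_le_card fun y hy => ?_).trans_lt
      (card_erase_lt_of_mem (mem_filter.mpr ⟨hxS, hx⟩))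
    obtain ⟨hyS, hy⟩ := mem_filter.mp hy
    have hyx : y ≠ x := by rintro rfl; simp at hy
    rw [Function.update_of_ne hyx] at hy
    exact mem_erase.mpr ⟨hyx, mem_filter.mpr ⟨hyS, hD y hyS hy⟩⟩
  rw [← hfg, ← hf_update g x _ hxS hg hg', ih _ hlt hg' rfl]

end Balanced

section FiberProduct

def fiberProd {α R : Type*} [CommMonoid R] {ℓ : ℕ} (e : Finset α → R) (Γ : Finset α)
    (g : α → Fin ℓ) : R :=
  ∏ i, e {x ∈ Γ | g x = i}

theorem fiberProd_congr {α R : Type*} [CommMonoid R] {ℓ : ℕ} {e : Finset α → R} {Γ : Finset α}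
    {g g' : α → Fin ℓ} (h : Set.EqOn g g' Γ) : fiberProd e Γ g = fiberProd e Γ g' :=
  prod_congr rfl fun _ _ => congrArg e (filter_congr fun _ hx => by rw [h hx])

variable {k : Type*} [Field k] {n ℓ : ℕ} {p : Projectivization k (Fin (n + 1) → k)}
  {Γ : Finset (Projectivization k (Fin (n + 1) → k))}
  {e : Finset (Projectivization k (Fin (n + 1) → k)) → MvPolynomial (Fin (n + 1)) k}
  {g : Projectivization k (Fin (n + 1) → k) → Fin ℓ}

def IsSeparatingFamily (n : ℕ) (p : Projectivization k (Fin (n + 1) → k))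
    (Γ : Finset (Projectivization k (Fin (n + 1) → k)))
    (e : Finset (Projectivization k (Fin (n + 1) → k)) → MvPolynomial (Fin (n + 1)) k) : Prop :=
  ∀ A ⊆ Γ, #A ≤ n → IsSeparatingForm p A (e A)

theorem LinGenPos.exists_isBalanced_eval_eq_zero [NeZero ℓ] (hlgp : LinGenPos k n Γ)
    {u : Fin ℓ → MvPolynomial (Fin (n + 1)) k} (hu : ∀ i, u i ≠ 0 ∧ (u i).IsHomogeneous 1)
    (hvan : ∀ q ∈ Γ, eval q.rep (∏ i, u i) = 0) :
    ∃ f : _ → Fin ℓ, IsBalanced Γ n f ∧ ∀ q ∈ Γ, eval q.rep (u (f q)) = 0 := by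
  choose! f hf using fun q (hq : q ∈ Γ) => by
    simpa [eval_prod, prod_eq_zero_iff] using hvan q hq
  refine ⟨f, fun i => hlgp.card_le_of_eval_eq_zero (hu i).1 (hu i).2
    (coe_subset.mpr (filter_subset _ _)) fun q hq => ?_, hf⟩
  obtain ⟨hqΓ, rfl⟩ := mem_filter.mp hq
  exact hf q hqΓ

theorem IsSeparatingFamily.fiber (he : IsSeparatingFamily n p Γ e) (hg : IsBalanced Γ n g)
    (i : Fin ℓ) : IsSeparatingForm p {x ∈ Γ | g x = i} (e {x ∈ Γ | g x = i}) :=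
  he _ (filter_subset _ _) (hg i)

theorem IsSeparatingFamily.fiber_ne_zero_isHomogeneous (he : IsSeparatingFamily n p Γ e)
    (hg : IsBalanced Γ n g) (i : Fin ℓ) :
    e {x ∈ Γ | g x = i} ≠ 0 ∧ (e {x ∈ Γ | g x = i}).IsHomogeneous 1 :=
  ⟨(he.fiber hg i).ne_zero, (he.fiber hg i).1⟩

theorem IsSeparatingFamily.mkQ_fiberProd_update
    [DecidableEq (Projectivization k (Fin (n + 1) → k))] (he : IsSeparatingFamily n p Γ e)
    {x : Projectivization k (Fin (n + 1) → k)} {b : Fin ℓ} (hx : x ∈ Γ) (hg : IsBalanced Γ n g)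
    (hg' : IsBalanced Γ n (Function.update g x b)) :
    (Submodule.span k (Phi k n (insert p ↑Γ) ℓ)).mkQ (fiberProd e Γ (Function.update g x b)) =
      (Submodule.span k (Phi k n (insert p ↑Γ) ℓ)).mkQ (fiberProd e Γ g) := by
  set g' := Function.update g x b
  -- `w` is `fiberProd e Γ g` with the factor of box `b` already replaced by that of `g'`.
  set w := Function.update (fun i => e {y ∈ Γ | g y = i}) b (e {y ∈ Γ | g' y = b})
  have hw : ∀ i, w i ≠ 0 ∧ (w i).IsHomogeneous 1 := fun i => by
    rcases eq_or_ne i b with rfl | hib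
    · simpa [w] using he.fiber_ne_zero_isHomogeneous hg' i
    · simpa [w, hib] using he.fiber_ne_zero_isHomogeneous hg i
  have hwp : ∀ i, eval p.rep (w i) = 1 := fun i => by
    rcases eq_or_ne i b with rfl | hib
    · simpa [w] using (he.fiber hg' i).2.1
    · simpa [w, hib] using (he.fiber hg i).2.1
  trans (Submodule.span k (Phi k n (insert p ↑Γ) ℓ)).mkQ (∏ i, w i)
  · refine mkQ_prod_eq_of_exists_common_zero _ _ (he.fiber_ne_zero_isHomogeneous hg') hw
      (fun i => by rw [hwp, (he.fiber hg' i).2.1]) fun q hq => ⟨g' q, ?_, ?_⟩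
    · exact (he.fiber hg' _).2.2 q (by simpa using hq)
    · rcases eq_or_ne (g' q) b with hb | hb
      · simpa [w, hb] using (he.fiber hg' b).2.2 q (by simpa [hb] using hq)
      · have hqx : q ≠ x := by rintro rfl; simp [g'] at hb
        rw [show g' q = g q from Function.update_of_ne hqx _ _] at hb ⊢
        simpa [w, hb] using (he.fiber hg (g q)).2.2 q (by simpa using hq)
  · refine mkQ_prod_eq_of_exists_common_zero _ _ hw (he.fiber_ne_zero_isHomogeneous hg)
      (fun i => by rw [hwp, (he.fiber hg i).2.1]) fun q hq => ⟨g q, ?_, ?_⟩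
    · rcases eq_or_ne (g q) b with hb | hb
      · have hgq : g' q = b := by
          rcases eq_or_ne q x with rfl | hqx
          · simp [g']
          · simp [g', hqx, hb]
        simpa [w, hb] using (he.fiber hg' b).2.2 q (by simpa [hgq] using hq)
      · simpa [w, hb] using (he.fiber hg (g q)).2.2 q (by simpa using hq)
    · exact (he.fiber hg _).2.2 q (by simpa using hq)

theorem IsSeparatingFamily.mkQ_fiberProd_eq [DecidableEq (Projectivization k (Fin (n + 1) → k))]
    (he : IsSeparatingFamily n p Γ e) (hΓ : #Γ < ℓ * n) {g₁ g₂ : _ → Fin ℓ}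
    (h₁ : IsBalanced Γ n g₁) (h₂ : IsBalanced Γ n g₂) :
    (Submodule.span k (Phi k n (insert p ↑Γ) ℓ)).mkQ (fiberProd e Γ g₁) =
      (Submodule.span k (Phi k n (insert p ↑Γ) ℓ)).mkQ (fiberProd e Γ g₂) :=
  IsBalanced.apply_eq_of_forall_update
    (f := fun g => (Submodule.span k (Phi k n (insert p ↑Γ) ℓ)).mkQ (fiberProd e Γ g)) hΓ
    (fun _ _ h => by rw [fiberProd_congr h])
    (fun _ _ _ hx hg hg' => he.mkQ_fiberProd_update hx hg hg') h₁ h₂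

theorem IsSeparatingFamily.mkQ_eq_eval_smul_mkQ_fiberProd
    [DecidableEq (Projectivization k (Fin (n + 1) → k))] (hlgp : LinGenPos k n (insert p ↑Γ))
    (he : IsSeparatingFamily n p Γ e) (hΓ : #Γ < ℓ * n) (hg : IsBalanced Γ n g)
    {G : MvPolynomial (Fin (n + 1)) k} (hG : G ∈ Phi k n Γ ℓ) :
    (Submodule.span k (Phi k n (insert p ↑Γ) ℓ)).mkQ G =
      eval p.rep G • (Submodule.span k (Phi k n (insert p ↑Γ) ℓ)).mkQ (fiberProd e Γ g) := by
  obtain ⟨hGvan, u, hu, rfl⟩ := hG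
  by_cases hup : eval p.rep (∏ i, u i) = 0
  · rw [hup, zero_smul, Submodule.mkQ_apply, Submodule.Quotient.mk_eq_zero]
    refine Submodule.subset_span (prod_mem_Phi u hu ?_)
    rintro q (rfl | hq)
    exacts [hup, hGvan.2 q hq]
  have : NeZero ℓ := ⟨by rintro rfl; simp at hΓ⟩
  obtain ⟨f, hf_bal, hf⟩ :=
    (hlgp.mono (Set.subset_insert p _)).exists_isBalanced_eval_eq_zero hu hGvan.2
  have hup_i : ∀ i, eval p.rep (u i) ≠ 0 := fun i h =>
    hup (by rw [eval_prod]; exact prod_eq_zero (mem_univ i) h)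
  set v := fun i => C (eval p.rep (u i)) * e {x ∈ Γ | f x = i}
  have hv : ∀ i, v i ≠ 0 ∧ (v i).IsHomogeneous 1 := fun i =>
    ⟨mul_ne_zero (by simpa using hup_i i) (he.fiber hf_bal i).ne_zero,
      (he.fiber hf_bal i).1.C_mul _⟩
  have hvp : ∀ i, eval p.rep (u i) = eval p.rep (v i) := fun i => by
    simp [v, (he.fiber hf_bal i).2.1]
  have hv_prod : ∏ i, v i = eval p.rep (∏ i, u i) • fiberProd e Γ f := by
    rw [prod_mul_distrib, ← map_prod, ← eval_prod, C_mul', fiberProd]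
  rw [mkQ_prod_eq_of_exists_common_zero u v hu hv hvp fun q hq =>
      ⟨f q, hf q hq, by
        simp only [v, eval_mul, (he.fiber hf_bal _).2.2 q (mem_filter.mpr ⟨hq, rfl⟩), mul_zero]⟩,
    hv_prod, map_smul, he.mkQ_fiberProd_eq hΓ hf_bal hg]

end FiberProduct

section Spanning

variable {k : Type*} [Field k] {n ℓ : ℕ}

theorem span_Phi_empty : Submodule.span k (Phi k n ∅ ℓ) = gradedVanishing k n ∅ ℓ := by
  refine le_antisymm span_Phi_le_gradedVanishing fun F hF => ?_
  have hF' : F ∈ homogeneousSubmodule (Fin (n + 1)) k ℓ := hF.1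
  rw [← homogeneousSubmodule_one_pow, homogeneousSubmodule_one_eq_span_X,
    Submodule.span_pow] at hF'
  refine Submodule.span_mono (fun _ hx => ?_) hF'
  obtain ⟨f, rfl⟩ := Set.mem_pow.mp hx
  rw [List.prod_ofFn]
  refine prod_mem_Phi _ (fun i => ?_) (by simp)
  obtain ⟨j, hj⟩ := (f i).2
  rw [← hj]
  exact ⟨X_ne_zero j, isHomogeneous_X k j⟩

theorem span_Phi_insert [DecidableEq (Projectivization k (Fin (n + 1) → k))]
    {p : Projectivization k (Fin (n + 1) → k)} {Γ : Finset (Projectivization k (Fin (n + 1) → k))}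
    (hp : p ∉ Γ) (hlgp : LinGenPos k n ↑(insert p Γ)) (hΓ : #Γ < ℓ * n)
    (ih : Submodule.span k (Phi k n Γ ℓ) = gradedVanishing k n Γ ℓ) :
    Submodule.span k (Phi k n ↑(insert p Γ) ℓ) = gradedVanishing k n ↑(insert p Γ) ℓ := by
  rw [coe_insert] at hlgp ⊢
  choose! e he using fun (A : Finset _) (hA : A ⊆ Γ) (hA_card : #A ≤ n) =>
    hlgp.exists_isSeparatingForm (A := A)
      (by rw [← coe_insert, coe_subset]; exact hA.trans (subset_insert p Γ)) hA_card
      (Set.mem_insert p _) fun hpA => hp (hA hpA)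
  obtain ⟨g, hg⟩ := exists_isBalanced hΓ
  have key : ∀ F ∈ Submodule.span k (Phi k n Γ ℓ),
      (Submodule.span k (Phi k n (insert p ↑Γ) ℓ)).mkQ F =
        eval p.rep F • (Submodule.span k (Phi k n (insert p ↑Γ) ℓ)).mkQ (fiberProd e Γ g) := by
    intro F hF
    induction hF using Submodule.span_induction with
    | mem G hG => exact IsSeparatingFamily.mkQ_eq_eval_smul_mkQ_fiberProd hlgp he hΓ hg hG
    | zero => simp
    | add _ _ _ _ h₁ h₂ => rw [map_add, h₁, h₂, map_add, add_smul]
    | smul c _ _ h => rw [map_smul, h, smul_eval, mul_smul]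
  refine le_antisymm span_Phi_le_gradedVanishing fun F hF => ?_
  have hF_mkQ := key F (ih ▸ gradedVanishing_anti (Set.subset_insert p _) hF)
  rwa [hF.2 p (Set.mem_insert p _), zero_smul, Submodule.mkQ_apply,
    Submodule.Quotient.mk_eq_zero] at hF_mkQ

theorem span_Phi_eq_gradedVanishing (Γ : Finset (Projectivization k (Fin (n + 1) → k)))
    (hlgp : LinGenPos k n Γ) (hΓ : #Γ ≤ ℓ * n) :
    Submodule.span k (Phi k n Γ ℓ) = gradedVanishing k n Γ ℓ := by
  classical
  induction Γ using Finset.induction_on with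
  | empty => simpa using span_Phi_empty
  | insert p Γ hp ih =>
    rw [card_insert_of_notMem hp] at hΓ
    exact span_Phi_insert hp hlgp (by omega) (ih (hlgp.mono (by simp)) (by omega))

end Spanning

theorem phi_spans_above_ceil_general (k : Type*) [Field k] (n d ℓ : ℕ)
    (hn : 1 ≤ n) (Γ : Set (Projectivization k (Fin (n + 1) → k)))
    (hfin : Γ.Finite) (hcard : Γ.ncard = d) (hlgp : LinGenPos k n Γ)
    (hge : ⌈(d : ℚ) / (n : ℚ)⌉ ≤ (ℓ : ℤ)) :
    Submodule.span k (Phi k n Γ ℓ) = gradedVanishing k n Γ ℓ := by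
  have hd : d ≤ ℓ * n := by
    have := Int.ceil_le.mp hge
    rw [div_le_iff₀ (by exact_mod_cast hn)] at this
    exact_mod_cast this
  rw [← hfin.coe_toFinset] at hlgp ⊢
  exact span_Phi_eq_gradedVanishing _ hlgp (by rwa [← Set.ncard_eq_toFinset_card Γ hfin, hcard])

/-- If `Γ ⊆ ℙⁿ` is a finite set of `d` points in linearly general position and
`ℓ ≥ ⌈d/n⌉`, then `Φ(Γ)_ℓ` generates `I(Γ)_ℓ` as a `k`-vector space. -/
theorem phi_spans_above_ceil (k : Type*) [Field k] [IsAlgClosed k] (n d ℓ : ℕ)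
    (hn : 1 ≤ n) (Γ : Set (Projectivization k (Fin (n + 1) → k)))
    (hfin : Γ.Finite) (hcard : Γ.ncard = d) (hlgp : LinGenPos k n Γ)
    (hge : ⌈(d : ℚ) / (n : ℚ)⌉ ≤ (ℓ : ℤ)) :
    Submodule.span k (Phi k n Γ ℓ) = gradedVanishing k n Γ ℓ :=
  phi_spans_above_ceil_general k n d ℓ hn Γ hfin hcard hlgp hge
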